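/- arXiv:2512.12848 — 3 statements merged into one kernel-verified Lean document; each statement's English description precedes it below -/
import Mathlib

section
/- Assume μ(γ⁰, s₀) = λ and that a := ∂_s μ(γ⁰, s₀) is a nonzero real number. Then there exist r₀ > 0 and δ₀ > 0 such that: (i) for every real γ with ‖γ − γ⁰‖ < r₀ and every s ∈ ℂ with Re s ∈ (s₀ − δ₀, s₀ + δ₀) and Im s ∈ (0, δ₀), one has μ(γ, s) ≠ λ; (ii) if a > 0, then for every such real γ and every sufficiently small ε > 0 the equation μ(γ, s) = λ + iε has exactly one solution s with Re s ∈ (s₀ − δ₀, s₀ + δ₀) and Im s ∈ (0, δ₀); and (iii) if a < 0, this equation has no solution in that region. -/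
/-!
Write `g_γ = μ(γ, ·)`. As `μ` is strictly differentiable at `(γ⁰, s₀)` with `∂_s μ = a`, on a
small ball every slice `g_γ` with `γ` near `γ⁰` approximates `z ↦ a z` with error at most
`|a|/2 ⋅ |z - w|`. Such a map is injective, and its image contains a ball of radius proportional
to `|a|` about `g_γ(s₀) ≈ λ`. For real `γ` the slice is real on the real axis, so comparing
`g_γ(s)` with `g_γ(Re s)` shows that `Im g_γ(s)` has the sign of `a ⋅ Im s`. Hence `g_γ` omits `λ`
on the upper half of the box, omits `λ + iε` there when `a < 0`, and when `a > 0` the unique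
preimage of `λ + iε` near `s₀` lies in the upper half.
-/

open Set Complex Metric NNReal Topology

section Slices

variable {𝕜 : Type*} [NontriviallyNormedField 𝕜]
  {E F G : Type*} [NormedAddCommGroup E] [NormedSpace 𝕜 E] [NormedAddCommGroup F]
  [NormedSpace 𝕜 F] [NormedAddCommGroup G] [NormedSpace 𝕜 G]

theorem ApproximatesLinearOn.comp_prodMk {f : E × F → G} {f' : E × F →L[𝕜] G}
    {s : Set (E × F)} {c : ℝ≥0} (hf : ApproximatesLinearOn f f' s c) (x : E) :
    ApproximatesLinearOn (fun y => f (x, y)) (f'.comp (.inr 𝕜 E F)) (Prod.mk x ⁻¹' s) c := by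
  intro y hy y' hy'
  simpa using hf _ hy _ hy'

theorem HasStrictFDerivAt.exists_approximatesLinearOn_slices {f : E × F → G}
    {f' : E × F →L[𝕜] G} {p : E × F} (hf : HasStrictFDerivAt f f' p) {c : ℝ≥0} (hc : 0 < c)
    {t : Set (E × F)} (ht : t ∈ 𝓝 p) :
    ∃ R > 0, ball p R ⊆ t ∧ ∀ x ∈ ball p.1 R,
      ApproximatesLinearOn (fun y => f (x, y)) (f'.comp (.inr 𝕜 E F)) (ball p.2 R) c := by
  obtain ⟨U, hU, hfU⟩ := hf.approximates_deriv_on_nhds (Or.inr hc)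
  obtain ⟨R, hR, hsub⟩ := Metric.mem_nhds_iff.mp (Filter.inter_mem hU ht)
  refine ⟨R, hR, hsub.trans inter_subset_right, fun x hx => ?_⟩
  refine (hfU.comp_prodMk x).mono_set fun y hy => (hsub ?_).1
  rw [← ball_prod_same]
  exact ⟨hx, hy⟩

end Slices

section Scalar

variable {𝕜 : Type*} [NontriviallyNormedField 𝕜] {f : 𝕜 → 𝕜} {f' : 𝕜 →L[𝕜] 𝕜} {s : Set 𝕜}
  {c : ℝ≥0}

theorem ContinuousLinearMap.eq_unitsEquivAut (h : f' 1 ≠ 0) :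
    f' = ContinuousLinearEquiv.unitsEquivAut 𝕜 (Units.mk0 _ h) :=
  ContinuousLinearMap.ext_ring (by simp)

theorem ContinuousLinearEquiv.nnnorm_unitsEquivAut_symm (u : 𝕜ˣ) :
    ‖((ContinuousLinearEquiv.unitsEquivAut 𝕜 u).symm : 𝕜 →L[𝕜] 𝕜)‖₊ = ‖(u : 𝕜)‖₊⁻¹ := by
  have : ((ContinuousLinearEquiv.unitsEquivAut 𝕜 u).symm : 𝕜 →L[𝕜] 𝕜) =
      (1 : 𝕜 →L[𝕜] 𝕜).smulRight (u⁻¹ : 𝕜ˣ).val := by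
    ext; simp [ContinuousLinearEquiv.unitsEquivAut_apply_symm]
  ext
  simp [this]

theorem ApproximatesLinearOn.injOn_of_lt_nnnorm_apply_one (hf : ApproximatesLinearOn f f' s c)
    (hc : c < ‖f' 1‖₊) : InjOn f s := by
  have h : f' 1 ≠ 0 := nnnorm_pos.mp (pos_of_gt hc)
  rw [f'.eq_unitsEquivAut h] at hf
  exact hf.injOn
    (Or.inr (by rwa [ContinuousLinearEquiv.nnnorm_unitsEquivAut_symm, inv_inv, Units.val_mk0]))

theorem ApproximatesLinearOn.surjOn_closedBall_of_apply_one_ne_zero [CompleteSpace 𝕜]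
    (hf : ApproximatesLinearOn f f' s c) (h : f' 1 ≠ 0) {b : 𝕜} {ε : ℝ} (hε : 0 ≤ ε)
    (hεs : closedBall b ε ⊆ s) :
    SurjOn f (closedBall b ε) (closedBall (f b) ((‖f' 1‖ - c) * ε)) := by
  rw [f'.eq_unitsEquivAut h] at hf
  have hsurj := hf.surjOn_closedBall_of_nonlinearRightInverse
    (ContinuousLinearEquiv.unitsEquivAut 𝕜 (Units.mk0 _ h)).toNonlinearRightInverse hε hεs
  simpa only [ContinuousLinearEquiv.toNonlinearRightInverse,
    ContinuousLinearEquiv.nnnorm_unitsEquivAut_symm, NNReal.coe_inv, inv_inv, coe_nnnorm,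
    Units.val_mk0] using hsurj

end Scalar

theorem pos_mul_iff_of_abs_sub_mul_le {a c v y : ℝ} (hc0 : 0 ≤ c) (hc : c < |a|)
    (h : |v - a * y| ≤ c * |y|) : 0 < a * v ↔ 0 < y := by
  have key : |a * v - |a| ^ 2 * y| ≤ |a| * c * |y| := by
    rw [sq_abs, show a * v - a ^ 2 * y = a * (v - a * y) by ring, abs_mul, mul_assoc]
    exact mul_le_mul_of_nonneg_left h (abs_nonneg a)
  have hpos : 0 < |a| * (|a| - c) := mul_pos (hc0.trans_lt hc) (sub_pos.2 hc)
  constructor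
  · intro hav
    by_contra hy
    rw [not_lt] at hy
    rw [abs_of_nonpos hy] at key
    nlinarith [(abs_le.mp key).2]
  · intro hy
    rw [abs_of_pos hy] at key
    nlinarith [(abs_le.mp key).1]

namespace Complex

theorem ofReal_re_mem_ball {z : ℂ} {x r : ℝ} (hz : z ∈ ball (x : ℂ) r) :
    (z.re : ℂ) ∈ ball (x : ℂ) r := by
  rw [mem_ball, dist_eq, ← ofReal_sub, norm_real, Real.norm_eq_abs]
  exact (by simpa using abs_re_le_norm (z - x) : |z.re - x| ≤ ‖z - x‖).trans_lt
    (by rwa [mem_ball, dist_eq] at hz)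

theorem reProdIm_Ioo_subset_ball (x δ : ℝ) :
    Ioo (x - δ) (x + δ) ×ℂ Ioo 0 δ ⊆ ball (x : ℂ) (2 * δ) := by
  rintro z ⟨⟨hre₁, hre₂⟩, him₀, him₁⟩
  rw [mem_ball, dist_eq]
  calc ‖z - x‖ ≤ |z.re - x| + |z.im| := by simpa using norm_le_abs_re_add_abs_im (z - x)
    _ < δ + δ := add_lt_add (abs_sub_lt_iff.mpr ⟨by linarith, by linarith⟩)
        (abs_lt.mpr ⟨by linarith, him₁⟩)
    _ = 2 * δ := by ring

end Complex

section RealOnRealAxis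

variable {f : ℂ → ℂ} {f' : ℂ →L[ℂ] ℂ} {c : ℝ≥0} {a : ℝ}

theorem ApproximatesLinearOn.abs_im_sub_le {s : Set ℂ} (hf : ApproximatesLinearOn f f' s c)
    (hf' : f' 1 = a) {z : ℂ} (hz : z ∈ s) (hre : (z.re : ℂ) ∈ s) (hreal : (f z.re).im = 0) :
    |(f z).im - a * z.im| ≤ c * |z.im| := by
  have hz_sub : z - z.re = z.im * I := by
    apply Complex.ext <;> simp
  have hlin : f' (z - z.re) = z.im * I * a := by
    rw [← mul_one (z - z.re), ← smul_eq_mul, f'.map_smul, hf', hz_sub, smul_eq_mul]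
  calc |(f z).im - a * z.im| = |(f z - f z.re - f' (z - z.re)).im| := by
        rw [hlin]; congr 1; simp [hreal, mul_comm]
    _ ≤ ‖f z - f z.re - f' (z - z.re)‖ := abs_im_le_norm _
    _ ≤ c * ‖z - z.re‖ := hf z hz _ hre
    _ = c * |z.im| := by simp [hz_sub]

theorem ApproximatesLinearOn.pos_mul_im_iff {x r : ℝ}
    (hf : ApproximatesLinearOn f f' (ball (x : ℂ) r) c) (hf' : f' 1 = a) (hc : c < |a|)
    (hreal : ∀ t : ℝ, (t : ℂ) ∈ ball (x : ℂ) r → (f t).im = 0) {z : ℂ}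
    (hz : z ∈ ball (x : ℂ) r) : 0 < a * (f z).im ↔ 0 < z.im :=
  have hre := ofReal_re_mem_ball hz
  pos_mul_iff_of_abs_sub_mul_le c.coe_nonneg hc (hf.abs_im_sub_le hf' hz hre (hreal _ hre))

variable {s₀ δ R : ℝ}

theorem ApproximatesLinearOn.pos_mul_im_of_mem_reProdIm
    (hf : ApproximatesLinearOn f f' (ball (s₀ : ℂ) R) c) (hf' : f' 1 = a) (hc : c < |a|)
    (hreal : ∀ t : ℝ, (t : ℂ) ∈ ball (s₀ : ℂ) R → (f t).im = 0) (hδR : 2 * δ ≤ R) {s : ℂ}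
    (hs : s ∈ Ioo (s₀ - δ) (s₀ + δ) ×ℂ Ioo 0 δ) : 0 < a * (f s).im :=
  (hf.pos_mul_im_iff hf' hc hreal
    (ball_subset_ball hδR (reProdIm_Ioo_subset_ball s₀ δ hs))).mpr hs.2.1

theorem ApproximatesLinearOn.existsUnique_mem_reProdIm
    (hf : ApproximatesLinearOn f f' (ball (s₀ : ℂ) R) c) (hf' : f' 1 = a) (hc : c < a)
    (hreal : ∀ t : ℝ, (t : ℂ) ∈ ball (s₀ : ℂ) R → (f t).im = 0) (hδ : 0 < δ) (hδR : 2 * δ ≤ R)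
    {w : ℂ} (hw : dist w (f s₀) ≤ (a - c) * (δ / 2)) (hw_im : 0 < w.im) :
    ∃! s, s ∈ Ioo (s₀ - δ) (s₀ + δ) ×ℂ Ioo 0 δ ∧ f s = w := by
  have ha : |a| = a := abs_of_pos (c.coe_nonneg.trans_lt hc)
  have hnorm : ‖f' 1‖ = a := by rw [hf', norm_real, Real.norm_eq_abs, ha]
  have hball : closedBall (s₀ : ℂ) (δ / 2) ⊆ ball (s₀ : ℂ) R :=
    closedBall_subset_ball (by linarith)
  obtain ⟨s, hs, rfl⟩ := hf.surjOn_closedBall_of_apply_one_ne_zero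
    (by rw [hf']; exact ofReal_ne_zero.mpr (by linarith [c.coe_nonneg])) (by positivity) hball
    (by rwa [mem_closedBall, hnorm])
  have hcf' : c < ‖f' 1‖₊ := by rwa [← NNReal.coe_lt_coe, coe_nnnorm, hnorm]
  refine ⟨s, ⟨?_, rfl⟩, fun s' ⟨hs', hfs'⟩ => hf.injOn_of_lt_nnnorm_apply_one hcf'
    (ball_subset_ball hδR (reProdIm_Ioo_subset_ball s₀ δ hs')) (hball hs) hfs'⟩
  have hs_im : 0 < s.im :=
    (hf.pos_mul_im_iff hf' (ha.symm ▸ hc) hreal (hball hs)).mp (mul_pos (by linarith) hw_im)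
  have hdist : ‖s - s₀‖ ≤ δ / 2 := by rwa [mem_closedBall, Complex.dist_eq] at hs
  have hre : |s.re - s₀| ≤ ‖s - s₀‖ := by simpa using abs_re_le_norm (s - s₀)
  have him : |s.im| ≤ ‖s - s₀‖ := by simpa using abs_im_le_norm (s - s₀)
  obtain ⟨hre₁, hre₂⟩ := abs_sub_lt_iff.mp (hre.trans_lt (by linarith) : |s.re - s₀| < δ)
  exact ⟨⟨by linarith, by linarith⟩, hs_im, by linarith [le_abs_self s.im]⟩

theorem ApproximatesLinearOn.levelSet_reProdIm (lam : ℝ)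
    (hf : ApproximatesLinearOn f f' (ball (s₀ : ℂ) R) c) (hf' : f' 1 = a) (hc : c < |a|)
    (hreal : ∀ t : ℝ, (t : ℂ) ∈ ball (s₀ : ℂ) R → (f t).im = 0) (hδ : 0 < δ) (hδR : 2 * δ ≤ R)
    (hclose : dist (f s₀) lam < (|a| - c) * δ / 4) :
    (∀ s : ℂ, s.re ∈ Ioo (s₀ - δ) (s₀ + δ) → s.im ∈ Ioo 0 δ → f s ≠ lam) ∧
    (0 < a → ∃ ε₁ > (0 : ℝ), ∀ ε : ℝ, 0 < ε → ε < ε₁ →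
      ∃! s : ℂ, s.re ∈ Ioo (s₀ - δ) (s₀ + δ) ∧ s.im ∈ Ioo 0 δ ∧ f s = lam + I * ε) ∧
    (a < 0 → ∃ ε₁ > (0 : ℝ), ∀ ε : ℝ, 0 < ε → ε < ε₁ →
      ¬ ∃ s : ℂ, s.re ∈ Ioo (s₀ - δ) (s₀ + δ) ∧ s.im ∈ Ioo 0 δ ∧ f s = lam + I * ε) := by
  have hpos {s : ℂ} (hre : s.re ∈ Ioo (s₀ - δ) (s₀ + δ)) (him : s.im ∈ Ioo 0 δ) :
      0 < a * (f s).im :=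
    hf.pos_mul_im_of_mem_reProdIm hf' hc hreal hδR ⟨hre, him⟩
  refine ⟨fun s hre him hs => ?_, fun ha => ?_, fun ha => ⟨1, one_pos, ?_⟩⟩
  · simpa [hs] using hpos hre him
  · have hη : 0 < (|a| - c) * δ / 4 := by have := sub_pos.mpr hc; positivity
    refine ⟨_, hη, fun ε hε hεη => ?_⟩
    have hw : dist (lam + I * ε) (f s₀) ≤ (a - c) * (δ / 2) := by
      have hεdist : dist (lam + I * ε) (lam : ℂ) = ε := by simp [abs_of_pos hε]
      calc dist (lam + I * ε) (f s₀) ≤ dist (lam + I * ε) (lam : ℂ) + dist (lam : ℂ) (f s₀) :=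
            dist_triangle _ _ _
        _ ≤ (|a| - c) * δ / 4 + (|a| - c) * δ / 4 := by rw [hεdist, dist_comm]; linarith
        _ = (a - c) * (δ / 2) := by rw [abs_of_pos ha]; ring
    simpa only [mem_reProdIm, and_assoc] using
      hf.existsUnique_mem_reProdIm hf' (by rwa [abs_of_pos ha] at hc) hreal hδ hδR hw
        (by simpa using hε)
  · rintro ε hε - ⟨s, hre, him, hs⟩
    exact (mul_neg_of_neg_of_pos ha hε).not_gt (by simpa [hs] using hpos hre him)

end RealOnRealAxis

/-- Let `μ : ℂ^{n-1} × ℂ → ℂ` be analytic near a real point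
`(γ⁰, s₀)` and real-valued at real points of this neighborhood, with
`μ(γ⁰, s₀) = λ` and `a := ∂_s μ(γ⁰, s₀)` a nonzero real number.  Then there are
`r₀, δ₀ > 0` such that: (i) for every real `γ` with `‖γ - γ⁰‖ < r₀` and every
`s ∈ (s₀-δ₀, s₀+δ₀) + i(0, δ₀)` one has `μ(γ, s) ≠ λ`; (ii) if `a > 0`, for every
such `γ` and all sufficiently small `ε > 0` the equation `μ(γ, s) = λ + iε` has
exactly one solution `s` in this complex box; (iii) if `a < 0`, no solution. -/
theorem level_set_complex_box_nondegenerate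
    (m : ℕ) (μ : ((Fin m → ℂ) × ℂ) → ℂ)
    (γ₀ : Fin m → ℝ) (s₀ : ℝ) (lam : ℝ)
    (V : Set ((Fin m → ℂ) × ℂ)) (hV : IsOpen V)
    (hmem : ((fun i => (γ₀ i : ℂ)), (s₀ : ℂ)) ∈ V)
    (hμan : AnalyticOnNhd ℂ μ V)
    (hreal : ∀ (γ : Fin m → ℝ) (t : ℝ),
      ((fun i => (γ i : ℂ)), (t : ℂ)) ∈ V → (μ ((fun i => (γ i : ℂ)), (t : ℂ))).im = 0)
    (hval : μ ((fun i => (γ₀ i : ℂ)), (s₀ : ℂ)) = (lam : ℂ))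
    (a : ℝ) (ha : a ≠ 0)
    (hds : deriv (fun z : ℂ => μ ((fun i => (γ₀ i : ℂ)), z)) (s₀ : ℂ) = (a : ℂ)) :
    ∃ r₀ > (0 : ℝ), ∃ δ₀ > (0 : ℝ),
      (∀ γ : Fin m → ℝ, ‖γ - γ₀‖ < r₀ → ∀ s : ℂ,
        s.re ∈ Ioo (s₀ - δ₀) (s₀ + δ₀) → s.im ∈ Ioo 0 δ₀ →
          μ ((fun i => (γ i : ℂ)), s) ≠ (lam : ℂ)) ∧
      (0 < a → ∀ γ : Fin m → ℝ, ‖γ - γ₀‖ < r₀ →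
        ∃ ε₁ > (0 : ℝ), ∀ ε : ℝ, 0 < ε → ε < ε₁ →
          ∃! s : ℂ, s.re ∈ Ioo (s₀ - δ₀) (s₀ + δ₀) ∧ s.im ∈ Ioo 0 δ₀ ∧
            μ ((fun i => (γ i : ℂ)), s) = (lam : ℂ) + Complex.I * (ε : ℂ)) ∧
      (a < 0 → ∀ γ : Fin m → ℝ, ‖γ - γ₀‖ < r₀ →
        ∃ ε₁ > (0 : ℝ), ∀ ε : ℝ, 0 < ε → ε < ε₁ →
          ¬ ∃ s : ℂ, s.re ∈ Ioo (s₀ - δ₀) (s₀ + δ₀) ∧ s.im ∈ Ioo 0 δ₀ ∧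
            μ ((fun i => (γ i : ℂ)), s) = (lam : ℂ) + Complex.I * (ε : ℂ)) := by
  set x₀ : Fin m → ℂ := fun i => (γ₀ i : ℂ)
  set c : ℝ≥0 := ‖a‖₊ / 2
  have hc : (c : ℝ) < |a| := by simpa [c] using half_lt_self (abs_pos.mpr ha)
  have hslope : (fderiv ℂ μ (x₀, s₀)).comp (.inr ℂ _ ℂ) 1 = a := by
    rw [← hds]
    exact ((hμan _ hmem).differentiableAt.hasFDerivAt.comp_hasDerivAt (s₀ : ℂ)
      ((hasDerivAt_const (s₀ : ℂ) x₀).prodMk (hasDerivAt_id _))).deriv.symm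
  obtain ⟨R, hR, hRV, happrox⟩ :=
    (hμan _ hmem).hasStrictFDerivAt.exists_approximatesLinearOn_slices (c := c)
      (div_pos (nnnorm_pos.mpr ha) two_pos) (hV.mem_nhds hmem)
  have hη : 0 < (|a| - c) * (R / 2) / 4 := by have := sub_pos.mpr hc; positivity
  have hcoe : Continuous fun γ : Fin m → ℝ => fun i => (γ i : ℂ) := by fun_prop
  have hμγ := (hμan _ hmem).continuousAt.comp (hcoe.prodMk continuous_const).continuousAt (x := γ₀)
  rw [ContinuousAt, Function.comp_apply, hval] at hμγ
  obtain ⟨r₀, hr₀, hnear⟩ := Metric.eventually_nhds_iff.mp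
    (((hcoe.tendsto γ₀).eventually (ball_mem_nhds x₀ hR)).and (hμγ.eventually (ball_mem_nhds _ hη)))
  have hslice (γ : Fin m → ℝ) (hγ : ‖γ - γ₀‖ < r₀) := by
    obtain ⟨hx, hμγ⟩ := hnear (by rwa [dist_eq_norm])
    exact (happrox _ hx).levelSet_reProdIm lam hslope hc
      (fun t ht => hreal γ t (hRV (by rw [← ball_prod_same]; exact ⟨hx, ht⟩)))
      (half_pos hR) (by linarith) hμγ
  exact ⟨r₀, hr₀, R / 2, half_pos hR, fun γ hγ => (hslice γ hγ).1,
    fun ha γ hγ => (hslice γ hγ).2.1 ha, fun ha γ hγ => (hslice γ hγ).2.2 ha⟩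
end

section
/- Let f : ℂ → ℂ be analytic on an open neighborhood of a real point s₀, real-valued on the real points of this neighborhood, and set λ := f(s₀) ∈ ℝ. Assume f′(s₀) = 0 and f″(s₀) ≠ 0. Then there exists δ₀ > 0 such that for every sufficiently small ε > 0 the equation f(s) = λ + iε has exactly two solutions s in the open disk |s − s₀| < δ₀; both are simple zeros of f − (λ + iε), neither solution is real, and exactly one of them has positive imaginary part while the other has negative imaginary part. -/
/-!
By the holomorphic Morse lemma, `f = λ + φ²` near `s₀` for a local coordinate `φ` with
`φ(s₀) = 0` and `2 φ'(s₀)² = f''(s₀)`; since `f` is real on the real axis, so is `f''(s₀)`.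
Hence, on a small disk, `f(s) = λ + iε` means `φ(s) = ±c` with `c² = iε`, and the local
inverse of `φ` gives exactly one solution for each sign, with `s - s₀ ≈ ±c / φ'(s₀)`.
The number `w = c / φ'(s₀)` has purely imaginary square `iε / φ'(s₀)²`, so it lies on a
diagonal: `|Im w| = ‖w‖ / √2`, which beats the error `‖w‖ / 2` of the linear approximation.
So the two solutions lie on opposite sides of the real axis.
-/

open Set Complex Filter Function Topology Metric

section NontriviallyNormedField

variable {𝕜 : Type*} [NontriviallyNormedField 𝕜]

theorem AnalyticAt.exists_eq_add_sq_mul [CompleteSpace 𝕜] [CharZero 𝕜] {f : 𝕜 → 𝕜} {z₀ : 𝕜}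
    (hf : AnalyticAt 𝕜 f z₀) (hd : deriv f z₀ = 0) :
    ∃ G : 𝕜 → 𝕜, AnalyticAt 𝕜 G z₀ ∧ 2 * G z₀ = iteratedDeriv 2 f z₀ ∧
      ∀ z, f z = f z₀ + (z - z₀) ^ 2 * G z := by
  have hp := hf.hasFPowerSeriesAt.has_fpower_series_dslope_fslope.has_fpower_series_dslope_fslope
  refine ⟨dslope (dslope f z₀) z₀, ⟨_, hp⟩, ?_, fun z => ?_⟩
  · rw [← hp.coeff_zero 1]
    change 2 * FormalMultilinearSeries.coeff _ 0 = _
    rw [FormalMultilinearSeries.coeff_fslope, FormalMultilinearSeries.coeff_fslope,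
      FormalMultilinearSeries.coeff_ofScalars, Nat.factorial_two, Nat.cast_ofNat,
      mul_div_cancel₀ _ two_ne_zero]
  · have h₁ := sub_smul_dslope f z₀ z
    have h₂ := sub_smul_dslope (dslope f z₀) z₀ z
    rw [dslope_same, hd, sub_zero] at h₂
    rw [smul_eq_mul] at h₁ h₂
    rw [← h₂] at h₁
    linear_combination -h₁

theorem deriv_eq_two_mul_mul_of_eventuallyEq_add_sq {f φ : 𝕜 → 𝕜} {a z : 𝕜}
    (hf : f =ᶠ[𝓝 z] fun x => a + φ x ^ 2) (hφ : DifferentiableAt 𝕜 φ z) :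
    deriv f z = 2 * φ z * deriv φ z := by
  rw [hf.deriv_eq, ((hφ.hasDerivAt.fun_pow 2).const_add a).deriv]
  ring

theorem AnalyticAt.eventually_deriv_ne_zero_of_eventually_eq_add_sq [CompleteSpace 𝕜] [CharZero 𝕜]
    {f φ : 𝕜 → 𝕜} {a z₀ : 𝕜} (hφ : AnalyticAt 𝕜 φ z₀) (hφ' : deriv φ z₀ ≠ 0)
    (hf : ∀ᶠ z in 𝓝 z₀, f z = a + φ z ^ 2) : ∀ᶠ z in 𝓝 z₀, φ z ≠ 0 → deriv f z ≠ 0 := by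
  filter_upwards [hf.eventually_nhds, hφ.eventually_analyticAt,
    hφ.deriv.continuousAt.eventually_ne hφ'] with z hfz hφz hφ'z hz
  rw [deriv_eq_two_mul_mul_of_eventuallyEq_add_sq hfz hφz.differentiableAt]
  exact mul_ne_zero (mul_ne_zero two_ne_zero hz) hφ'z

theorem HasStrictDerivAt.exists_ball_injOn_and_ball_subset_image [CompleteSpace 𝕜]
    {φ : 𝕜 → 𝕜} {u z₀ : 𝕜} (hφ : HasStrictDerivAt φ u z₀) (hu : u ≠ 0) {s : Set 𝕜}
    (hs : s ∈ 𝓝 z₀) :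
    ∃ δ > 0, ∃ r > 0, ball z₀ δ ⊆ s ∧ InjOn φ (ball z₀ δ) ∧ ball (φ z₀) r ⊆ φ '' ball z₀ δ := by
  obtain ⟨δ, hδ, hball⟩ := Metric.mem_nhds_iff.mp (inter_mem hs (hφ.eventually_left_inverse hu))
  have himage : φ '' ball z₀ δ ∈ 𝓝 (φ z₀) := by
    rw [← hφ.map_nhds_eq hu]
    exact image_mem_map (ball_mem_nhds z₀ hδ)
  obtain ⟨r, hr, hr_sub⟩ := Metric.mem_nhds_iff.mp himage
  refine ⟨δ, hδ, r, hr, fun z hz => (hball hz).1, fun x hx y hy hxy => ?_, hr_sub⟩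
  rw [← (hball hx).2, hxy, (hball hy).2]

theorem norm_sub_le_half_of_norm_sub_le_third {E : Type*} [SeminormedAddCommGroup E] {d w : E}
    (h : ‖w - d‖ ≤ ‖d‖ / 3) : ‖d - w‖ ≤ ‖w‖ / 2 := by
  have := norm_le_norm_add_norm_sub' d w
  rw [norm_sub_rev w d] at h
  linarith

theorem HasDerivAt.eventually_norm_sub_sub_le {φ : 𝕜 → 𝕜} {u z₀ : 𝕜} (hφ : HasDerivAt φ u z₀)
    (hu : u ≠ 0) : ∀ᶠ z in 𝓝 z₀, ∀ w, φ z = φ z₀ + u * w → ‖z - z₀ - w‖ ≤ ‖w‖ / 2 := by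
  have hu' : 0 < ‖u‖ := norm_pos_iff.mpr hu
  filter_upwards [(hasDerivAt_iff_isLittleO.mp hφ).def (by positivity : 0 < ‖u‖ / 3)]
    with z hz w hw
  refine norm_sub_le_half_of_norm_sub_le_third ?_
  rw [hw, smul_eq_mul, show φ z₀ + u * w - φ z₀ - (z - z₀) * u = u * (w - (z - z₀)) by ring,
    norm_mul, mul_comm (‖u‖ / 3), mul_div_assoc'] at hz
  rw [le_div_iff₀ three_pos]
  nlinarith

end NontriviallyNormedField

theorem Complex.im_deriv_eq_zero_of_eventually_im_eq_zero {h : ℂ → ℂ} {t : ℝ}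
    (hd : DifferentiableAt ℂ h t) (him : ∀ᶠ x : ℝ in 𝓝 t, (h x).im = 0) :
    (deriv h t).im = 0 := by
  have hre : HasDerivAt (fun x : ℝ => (h x).im) (deriv h t).im t := by
    simpa [comp_def] using imCLM.hasFDerivAt.comp_hasDerivAt t hd.hasDerivAt.comp_ofReal
  exact hre.unique <| (hasDerivAt_const t 0).congr_of_eventuallyEq him

theorem Complex.im_iteratedDeriv_eq_zero {f : ℂ → ℂ} {V : Set ℂ} (hV : IsOpen V)
    (hf : AnalyticOnNhd ℂ f V) (hreal : ∀ t : ℝ, (t : ℂ) ∈ V → (f t).im = 0) (n : ℕ) :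
    ∀ t : ℝ, (t : ℂ) ∈ V → (iteratedDeriv n f t).im = 0 := by
  induction n with
  | zero => simpa using hreal
  | succ n ih =>
    intro t ht
    rw [iteratedDeriv_succ]
    refine im_deriv_eq_zero_of_eventually_im_eq_zero
      ((hf.iterated_deriv n _ ht).differentiableAt.congr_of_eventuallyEq ?_) ?_
    · simp [iteratedDeriv_eq_iterate]
    · filter_upwards [continuous_ofReal.continuousAt.preimage_mem_nhds (hV.mem_nhds ht)] with x hx
      exact ih x hx

theorem AnalyticAt.exists_eventually_sq_eq {G : ℂ → ℂ} {z₀ : ℂ} (hG : AnalyticAt ℂ G z₀)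
    (h₀ : G z₀ ≠ 0) : ∃ R : ℂ → ℂ, AnalyticAt ℂ R z₀ ∧ ∀ᶠ z in 𝓝 z₀, R z ^ 2 = G z := by
  obtain ⟨u, hu⟩ := IsAlgClosed.exists_pow_nat_eq (G z₀) two_pos
  -- normalising by `G z₀` keeps the argument of the logarithm near `1`, away from the slit
  refine ⟨fun z => u * Complex.exp (Complex.log (G z / G z₀) / 2), ?_, ?_⟩
  · have hslit : G z₀ / G z₀ ∈ slitPlane := by simp [h₀]
    exact analyticAt_const.mul
      (((hG.div analyticAt_const h₀).clog hslit).div analyticAt_const two_ne_zero).cexp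
  · filter_upwards [hG.continuousAt.eventually_ne h₀] with z hz
    rw [mul_pow, ← exp_nat_mul, hu, Nat.cast_ofNat, mul_div_cancel₀ _ two_ne_zero,
      exp_log (div_ne_zero hz h₀), mul_div_cancel₀ _ h₀]

/-- Holomorphic Morse lemma. -/
theorem AnalyticAt.exists_eventually_eq_add_sq {f : ℂ → ℂ} {z₀ : ℂ} (hf : AnalyticAt ℂ f z₀)
    (hd : deriv f z₀ = 0) (hd₂ : iteratedDeriv 2 f z₀ ≠ 0) :
    ∃ φ : ℂ → ℂ, AnalyticAt ℂ φ z₀ ∧ φ z₀ = 0 ∧ 2 * deriv φ z₀ ^ 2 = iteratedDeriv 2 f z₀ ∧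
      ∀ᶠ z in 𝓝 z₀, f z = f z₀ + φ z ^ 2 := by
  obtain ⟨G, hG, hG₀, hfG⟩ := hf.exists_eq_add_sq_mul hd
  obtain ⟨R, hR, hRG⟩ := hG.exists_eventually_sq_eq fun h => hd₂ (by rw [← hG₀, h, mul_zero])
  have hφ : HasDerivAt (fun z => (z - z₀) * R z) (1 * R z₀ + (z₀ - z₀) * deriv R z₀) z₀ :=
    ((hasDerivAt_id' z₀).sub_const z₀).mul hR.differentiableAt.hasDerivAt
  refine ⟨fun z => (z - z₀) * R z, by fun_prop, by simp, ?_, ?_⟩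
  · rw [hφ.deriv, sub_self, zero_mul, add_zero, one_mul, hRG.self_of_nhds, hG₀]
  · filter_upwards [hRG] with z hz
    rw [hfG z, mul_pow, hz]

theorem Complex.norm_lt_two_mul_abs_im_of_re_sq_eq_zero {w : ℂ} (hw : w ≠ 0)
    (h : (w ^ 2).re = 0) : ‖w‖ < 2 * |w.im| := by
  have hre : w.re ^ 2 = w.im ^ 2 := by
    rw [sq, mul_re] at h
    linarith
  have him : w.im ≠ 0 := fun h0 => hw (ext (by simpa [h0] using hre) h0)
  refine lt_of_pow_lt_pow_left₀ 2 (by positivity) ?_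
  rw [Complex.sq_norm, normSq_apply, mul_pow, sq_abs]
  have := pow_pos (abs_pos.mpr him) 2
  rw [sq_abs] at this
  nlinarith

theorem Complex.exists_sq_eq_and_norm_lt_two_mul_im {q : ℂ} (hq : q ≠ 0) (hre : q.re = 0) :
    ∃ w : ℂ, w ^ 2 = q ∧ ‖w‖ < 2 * w.im := by
  obtain ⟨w, hw⟩ := IsAlgClosed.exists_pow_nat_eq q two_pos
  have hw₀ : w ≠ 0 := by rintro rfl; exact hq (by simp [← hw])
  have hlt := norm_lt_two_mul_abs_im_of_re_sq_eq_zero hw₀ (hw ▸ hre)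
  rcases le_or_gt 0 w.im with hnonneg | hneg
  · exact ⟨w, hw, by rwa [abs_of_nonneg hnonneg] at hlt⟩
  · exact ⟨-w, by rw [neg_sq, hw], by rwa [abs_of_neg hneg, ← neg_im, ← norm_neg] at hlt⟩

theorem Complex.im_pos_of_norm_sub_sub_le {z w : ℂ} {t : ℝ} (h : ‖z - t - w‖ ≤ ‖w‖ / 2)
    (hw : ‖w‖ < 2 * w.im) : 0 < z.im := by
  have := (abs_le.mp ((abs_im_le_norm (z - t - w)).trans h)).1
  simp only [sub_im, ofReal_im, sub_zero] at this
  linarith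

theorem Complex.im_neg_of_norm_sub_add_le {z w : ℂ} {t : ℝ} (h : ‖z - t + w‖ ≤ ‖w‖ / 2)
    (hw : ‖w‖ < 2 * w.im) : z.im < 0 := by
  have := (abs_le.mp ((abs_im_le_norm (z - t + w)).trans h)).2
  simp only [add_im, sub_im, ofReal_im, sub_zero] at this
  linarith

theorem setOf_mem_and_eq_add_sq_eq_pair {α K : Type*} [CommRing K] [NoZeroDivisors K]
    {f φ : α → K} {B : Set α} {a c : K} {z₁ z₂ : α} (hφ : InjOn φ B)
    (hf : ∀ z ∈ B, f z = a + φ z ^ 2) (hz₁ : z₁ ∈ B) (hz₂ : z₂ ∈ B) (h₁ : φ z₁ = c)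
    (h₂ : φ z₂ = -c) : {z | z ∈ B ∧ f z = a + c ^ 2} = {z₁, z₂} := by
  ext z
  constructor
  · rintro ⟨hz, hfz⟩
    rw [hf z hz, add_right_inj, sq_eq_sq_iff_eq_or_eq_neg] at hfz
    rcases hfz with h | h
    · exact Or.inl (hφ hz hz₁ (h.trans h₁.symm))
    · exact Or.inr (hφ hz hz₂ (h.trans h₂.symm))
  · rintro (rfl | rfl)
    · exact ⟨hz₁, by rw [hf _ hz₁, h₁]⟩
    · exact ⟨hz₂, by rw [hf _ hz₂, h₂, neg_sq]⟩

/-- Let `f : ℂ → ℂ` be analytic on an open neighborhood of a real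
point `s₀`, real-valued on real points of this neighborhood, `λ := f(s₀) ∈ ℝ`,
`f'(s₀) = 0` and `f''(s₀) ≠ 0`.  Then there is `δ₀ > 0` such that for all
sufficiently small `ε > 0` the equation `f(s) = λ + iε` has exactly two solutions in
the disk `|s - s₀| < δ₀`; both are simple zeros of `f - (λ + iε)`, neither is real,
and exactly one has positive imaginary part while the other has negative imaginary
part. -/
theorem degenerate_double_root_splitting
    (f : ℂ → ℂ) (s₀ : ℝ) (lam : ℝ)
    (V : Set ℂ) (hV : IsOpen V) (hmem : (s₀ : ℂ) ∈ V)
    (hfan : AnalyticOnNhd ℂ f V)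
    (hreal : ∀ t : ℝ, (t : ℂ) ∈ V → (f (t : ℂ)).im = 0)
    (hval : f (s₀ : ℂ) = (lam : ℂ))
    (hd1 : deriv f (s₀ : ℂ) = 0)
    (hd2 : iteratedDeriv 2 f (s₀ : ℂ) ≠ 0) :
    ∃ δ₀ > (0 : ℝ), ∃ ε₁ > (0 : ℝ), ∀ ε : ℝ, 0 < ε → ε < ε₁ →
      ∃ z₁ z₂ : ℂ, z₁ ≠ z₂ ∧
        {s : ℂ | ‖s - (s₀ : ℂ)‖ < δ₀ ∧ f s = (lam : ℂ) + Complex.I * (ε : ℂ)}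
          = {z₁, z₂} ∧
        deriv f z₁ ≠ 0 ∧ deriv f z₂ ≠ 0 ∧
        z₁.im ≠ 0 ∧ z₂.im ≠ 0 ∧
        0 < z₁.im ∧ z₂.im < 0 := by
  obtain ⟨φ, hφ, hφ₀, hφu, hfφ⟩ := (hfan _ hmem).exists_eventually_eq_add_sq hd1 hd2
  set u := deriv φ s₀
  have hu : u ≠ 0 := fun h => hd2 (by rw [← hφu, h]; ring)
  have hu_real : (u ^ 2).im = 0 := by
    simpa [← hφu] using im_iteratedDeriv_eq_zero hV hfan hreal 2 s₀ hmem
  rw [hval] at hfφ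
  have hnear : ∀ᶠ z in 𝓝 (s₀ : ℂ), f z = lam + φ z ^ 2 ∧ (φ z ≠ 0 → deriv f z ≠ 0) ∧
      ∀ w, φ z = u * w → ‖z - s₀ - w‖ ≤ ‖w‖ / 2 := by
    filter_upwards [hfφ, hφ.eventually_deriv_ne_zero_of_eventually_eq_add_sq hu hfφ,
      hφ.differentiableAt.hasDerivAt.eventually_norm_sub_sub_le hu] with z h₁ h₂ h₃
    exact ⟨h₁, h₂, by simpa [hφ₀] using h₃⟩
  obtain ⟨δ₀, hδ₀, r, hr, hsub, hinj, himage⟩ :=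
    hφ.hasStrictDerivAt.exists_ball_injOn_and_ball_subset_image hu hnear
  refine ⟨δ₀, hδ₀, r ^ 2, by positivity, fun ε hε hεr => ?_⟩
  obtain ⟨w, hw, hw_im⟩ := exists_sq_eq_and_norm_lt_two_mul_im
    (q := I * ε / u ^ 2) (by simp [hu, hε.ne']) (by simp [div_re, hu_real])
  have hsq : I * ε = (u * w) ^ 2 := by rw [mul_pow, hw]; field_simp
  have huw : ‖u * w‖ < r := by
    refine lt_of_pow_lt_pow_left₀ 2 hr.le ?_
    rwa [← norm_pow, ← hsq, norm_mul, norm_I, one_mul, norm_real, Real.norm_of_nonneg hε.le]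
  obtain ⟨z₁, hz₁, hφz₁⟩ := himage (show u * w ∈ ball (φ s₀) r by
    rwa [mem_ball_iff_norm, hφ₀, sub_zero])
  obtain ⟨z₂, hz₂, hφz₂⟩ := himage (show -(u * w) ∈ ball (φ s₀) r by
    rwa [mem_ball_iff_norm, hφ₀, sub_zero, norm_neg])
  have h₁ : 0 < z₁.im := im_pos_of_norm_sub_sub_le ((hsub hz₁).2.2 w hφz₁) hw_im
  have h₂ : z₂.im < 0 := im_neg_of_norm_sub_add_le
    (by simpa using (hsub hz₂).2.2 (-w) (by rw [hφz₂, mul_neg])) hw_im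
  have huw₀ : u * w ≠ 0 := mul_ne_zero hu (by rintro rfl; simp at hw_im)
  refine ⟨z₁, z₂, fun h => h₂.not_gt (h ▸ h₁), ?_, (hsub hz₁).2.1 (hφz₁ ▸ huw₀),
    (hsub hz₂).2.1 (hφz₂ ▸ neg_ne_zero.mpr huw₀), h₁.ne', h₂.ne, h₁, h₂⟩
  simp_rw [← mem_ball_iff_norm, hsq]
  exact setOf_mem_and_eq_add_sq_eq_pair hinj (fun z hz => (hsub hz).1) hz₁ hz₂ hφz₁ hφz₂
end

section
/- Let ℓ₁ < ℓ₂ be real numbers, δ > 0, and let f be analytic on an open set containing the closed rectangle {x + iy ∈ ℂ : ℓ₁ ≤ x ≤ ℓ₂, 0 ≤ y ≤ δ}. Assume f(ℓ₁ + iτ) = f(ℓ₂ + iτ) for all τ ∈ [0, δ] (periodicity in the real direction), and let σ : [ℓ₁, ℓ₂] → [0, δ] be continuously differentiable with σ(ℓ₁) = σ(ℓ₂). Then ∫_{ℓ₁}^{ℓ₂} f(t) dt = ∫_{ℓ₁}^{ℓ₂} f(t + iσ(t)) · (1 + iσ′(t)) dt. -/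
open Set Complex intervalIntegral

/-! A holomorphic function on an open rectangle has a primitive `F`, the wedge integral of Morera's
theorem. Both sides are then increments of `F` along their paths: `F ℓ₂ - F ℓ₁` and
`F (ℓ₂ + i σ(ℓ₁)) - F (ℓ₁ + i σ(ℓ₁))`, using `σ(ℓ₁) = σ(ℓ₂)`. They differ by the increments of `F`
along the two vertical edges `x + i[0, σ(ℓ₁)]`, `x ∈ {ℓ₁, ℓ₂}`, which are equal by periodicity. -/

lemma IsPreconnected.exists_isOpen_ordConnected_between {s u : Set ℝ} (hs : IsPreconnected s)
    (hu : IsOpen u) (hsu : s ⊆ u) : ∃ v, IsOpen v ∧ v.OrdConnected ∧ s ⊆ v ∧ v ⊆ u := by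
  rcases s.eq_empty_or_nonempty with rfl | ⟨x, hx⟩
  · exact ⟨∅, isOpen_empty, ordConnected_empty, subset_rfl, empty_subset u⟩
  exact ⟨_root_.connectedComponentIn u x, hu.connectedComponentIn,
    isPreconnected_connectedComponentIn.ordConnected,
    hs.subset_connectedComponentIn hx hsu, connectedComponentIn_subset u x⟩

namespace Complex

lemma exists_isOpen_ordConnected_reProdIm_between {s t : Set ℝ} {O : Set ℂ}
    (hs : IsCompact s) (ht : IsCompact t) (hs' : IsPreconnected s) (ht' : IsPreconnected t)
    (hO : IsOpen O) (hst : s ×ℂ t ⊆ O) :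
    ∃ u v : Set ℝ, IsOpen u ∧ IsOpen v ∧ u.OrdConnected ∧ v.OrdConnected ∧
      s ⊆ u ∧ t ⊆ v ∧ u ×ℂ v ⊆ O := by
  obtain ⟨u₀, v₀, hu₀, hv₀, hsu₀, htv₀, hprod⟩ := generalized_tube_lemma hs ht
    (hO.preimage equivRealProdCLM.symm.continuous) fun p hp ↦ by simpa using hst hp
  obtain ⟨u, hu, hu', hsu, huu₀⟩ := hs'.exists_isOpen_ordConnected_between hu₀ hsu₀
  obtain ⟨v, hv, hv', htv, hvv₀⟩ := ht'.exists_isOpen_ordConnected_between hv₀ htv₀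
  refine ⟨u, v, hu, hv, hu', hv', hsu, htv, fun z hz ↦ ?_⟩
  simpa [equivRealProdCLM_symm_apply] using hprod (mk_mem_prod (huu₀ hz.1) (hvv₀ hz.2))

section Primitive

variable {E : Type*} [NormedAddCommGroup E] [NormedSpace ℂ E] {f : ℂ → E} {s t : Set ℝ}
  [s.OrdConnected] [t.OrdConnected]

lemma rectangle_subset_reProdIm {z w : ℂ} (hz : z ∈ s ×ℂ t) (hw : w ∈ s ×ℂ t) :
    Rectangle z w ⊆ s ×ℂ t := fun _ hx ↦
  ⟨‹s.OrdConnected›.uIcc_subset (mem_reProdIm.1 hz).1 (mem_reProdIm.1 hw).1 hx.1,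
    ‹t.OrdConnected›.uIcc_subset (mem_reProdIm.1 hz).2 (mem_reProdIm.1 hw).2 hx.2⟩

lemma IsConservativeOn.wedgeIntegral_sub_wedgeIntegral (hf' : ContinuousOn f (s ×ℂ t))
    (hf : IsConservativeOn f (s ×ℂ t)) {p z w : ℂ}
    (hp : p ∈ s ×ℂ t) (hz : z ∈ s ×ℂ t) (hw : w ∈ s ×ℂ t) :
    wedgeIntegral p w f - wedgeIntegral p z f = wedgeIntegral z w f := by
  have horiz {x₁ x₂ y : ℝ} (hx₁ : x₁ ∈ s) (hx₂ : x₂ ∈ s) (hy : y ∈ t) :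
      IntervalIntegrable (fun x : ℝ ↦ f (x + y * I)) MeasureTheory.volume x₁ x₂ :=
    (hf'.comp (by fun_prop) fun x hx ↦ by
      simpa [mem_reProdIm] using ⟨‹s.OrdConnected›.uIcc_subset hx₁ hx₂ hx, hy⟩).intervalIntegrable
  have vert {x y₁ y₂ : ℝ} (hx : x ∈ s) (hy₁ : y₁ ∈ t) (hy₂ : y₂ ∈ t) :
      IntervalIntegrable (fun y : ℝ ↦ f (x + y * I)) MeasureTheory.volume y₁ y₂ :=
    (hf'.comp (by fun_prop) fun y hy ↦ by
      simpa [mem_reProdIm] using ⟨hx, ‹t.OrdConnected›.uIcc_subset hy₁ hy₂ hy⟩).intervalIntegrable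
  have hcorner : (z.re + p.im * I : ℂ) ∈ s ×ℂ t := by simpa [mem_reProdIm] using ⟨hz.1, hp.2⟩
  have hcorner' : (w.re + z.im * I : ℂ) ∈ s ×ℂ t := by simpa [mem_reProdIm] using ⟨hw.1, hz.2⟩
  have hrect := hf _ _ (rectangle_subset_reProdIm hcorner hcorner')
  rw [← add_eq_zero_iff_eq_neg, wedgeIntegral_add_wedgeIntegral_eq] at hrect
  simp only [add_re, ofReal_re, mul_re, I_re, mul_zero, ofReal_im, I_im, mul_one, sub_self,
    add_zero, add_im, mul_im, zero_add] at hrect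
  rw [wedgeIntegral, wedgeIntegral, wedgeIntegral,
    ← integral_add_adjacent_intervals (horiz hp.1 hz.1 hp.2) (horiz hz.1 hw.1 hp.2),
    ← integral_add_adjacent_intervals (vert hw.1 hp.2 hz.2) (vert hw.1 hz.2 hw.2),
    smul_add, ← sub_eq_zero, ← hrect]
  abel

variable [CompleteSpace E]

theorem IsConservativeOn.isExactOn_reProdIm (hs : IsOpen s) (ht : IsOpen t)
    (hf' : ContinuousOn f (s ×ℂ t)) (hf : IsConservativeOn f (s ×ℂ t)) :
    IsExactOn f (s ×ℂ t) := by
  rcases (s ×ℂ t).eq_empty_or_nonempty with hempty | ⟨p, hp⟩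
  · exact ⟨0, by simp [hempty]⟩
  refine ⟨fun w ↦ wedgeIntegral p w f, fun z hz ↦ ?_⟩
  -- Near `z`, the wedge integral based at `p` differs by a constant from the one based at `z`,
  -- whose derivative at `z` is known from Morera's theorem on a disc centred at `z`.
  obtain ⟨r, hr, hball⟩ := Metric.isOpen_iff.1 (hs.reProdIm ht) z hz
  have hderiv := (hf.mono hball).hasDerivAt_wedgeIntegral (hf'.mono hball) (Metric.mem_ball_self hr)
  refine (hderiv.const_add (wedgeIntegral p z f)).congr_of_eventuallyEq ?_
  filter_upwards [(hs.reProdIm ht).mem_nhds hz] with w hw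
  rw [← hf.wedgeIntegral_sub_wedgeIntegral hf' hp hz hw, add_sub_cancel]

theorem _root_.DifferentiableOn.isExactOn_reProdIm (hs : IsOpen s) (ht : IsOpen t)
    (hf : DifferentiableOn ℂ f (s ×ℂ t)) : IsExactOn f (s ×ℂ t) :=
  hf.isConservativeOn.isExactOn_reProdIm hs ht hf.continuousOn

end Primitive

section Paths

variable {F f : ℂ → ℂ} {U : Set ℂ} {a b : ℝ}

theorem integral_comp_mul_deriv_eq_sub {γ γ' : ℝ → ℂ} (hab : a ≤ b)
    (hF : ∀ z ∈ U, HasDerivAt F (f z) z) (hf : ContinuousOn f U)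
    (hγ : ∀ t ∈ Icc a b, HasDerivWithinAt γ (γ' t) (Icc a b) t)
    (hγ' : ContinuousOn γ' (Icc a b)) (hγU : MapsTo γ (Icc a b) U) :
    ∫ t in a..b, f (γ t) * γ' t = F (γ b) - F (γ a) := by
  have hγc : ContinuousOn γ (Icc a b) := fun t ht ↦ (hγ t ht).continuousWithinAt
  refine integral_eq_sub_of_hasDerivAt_of_le hab
    (fun t ht ↦ (hF _ (hγU ht)).continuousAt.comp_continuousWithinAt (hγc t ht))
    (fun t ht ↦ ?_) (((hf.comp hγc hγU).mul hγ').intervalIntegrable_of_Icc hab)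
  simpa [mul_comm] using
    (hF _ (hγU (Ioo_subset_Icc_self ht))).comp t ((hγ t (Ioo_subset_Icc_self ht)).hasDerivAt
      (Icc_mem_nhds ht.1 ht.2))

theorem integral_graph_eq_sub {σ σ' : ℝ → ℝ} (hab : a ≤ b)
    (hF : ∀ z ∈ U, HasDerivAt F (f z) z) (hf : ContinuousOn f U)
    (hσ : ∀ t ∈ Icc a b, HasDerivWithinAt σ (σ' t) (Icc a b) t)
    (hσ' : ContinuousOn σ' (Icc a b)) (hσU : ∀ t ∈ Icc a b, (t + σ t * I : ℂ) ∈ U) :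
    ∫ t in a..b, f (t + σ t * I) * (1 + σ' t * I) = F (b + σ b * I) - F (a + σ a * I) :=
  integral_comp_mul_deriv_eq_sub hab hF hf
    (fun t ht ↦ by
      simpa using ofRealCLM.hasDerivWithinAt.fun_add ((hσ t ht).ofReal_comp.mul_const I))
    (by fun_prop) hσU

theorem integral_vertical_eq_sub {x : ℝ} (hab : a ≤ b)
    (hF : ∀ z ∈ U, HasDerivAt F (f z) z) (hf : ContinuousOn f U)
    (hxU : ∀ τ ∈ Icc a b, (x + τ * I : ℂ) ∈ U) :
    ∫ τ in a..b, f (x + τ * I) * I = F (x + b * I) - F (x + a * I) :=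
  integral_comp_mul_deriv_eq_sub hab hF hf
    (fun τ _ ↦ by
      simpa using ((ofRealCLM.hasDerivAt.mul_const I).const_add (x : ℂ)).hasDerivWithinAt)
    continuousOn_const hxU

end Paths

end Complex

theorem contour_deformation_periodic_general
    (ℓ₁ ℓ₂ δ : ℝ) (hℓ : ℓ₁ < ℓ₂)
    (f : ℂ → ℂ)
    (O : Set ℂ) (hO : IsOpen O)
    (hRO : {z : ℂ | z.re ∈ Icc ℓ₁ ℓ₂ ∧ z.im ∈ Icc 0 δ} ⊆ O)
    (hfan : AnalyticOnNhd ℂ f O)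
    (hper : ∀ τ ∈ Icc (0 : ℝ) δ,
      f ((ℓ₁ : ℂ) + (τ : ℂ) * Complex.I) = f ((ℓ₂ : ℂ) + (τ : ℂ) * Complex.I))
    (σ σ' : ℝ → ℝ)
    (hσ : ∀ t ∈ Icc ℓ₁ ℓ₂, HasDerivWithinAt σ (σ' t) (Icc ℓ₁ ℓ₂) t)
    (hσ' : ContinuousOn σ' (Icc ℓ₁ ℓ₂))
    (hσrange : ∀ t ∈ Icc ℓ₁ ℓ₂, σ t ∈ Icc 0 δ)
    (hσends : σ ℓ₁ = σ ℓ₂) :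
    (∫ t in ℓ₁..ℓ₂, f (t : ℂ)) =
      ∫ t in ℓ₁..ℓ₂,
        f ((t : ℂ) + (σ t : ℂ) * Complex.I) * (1 + (σ' t : ℂ) * Complex.I) := by
  obtain ⟨u, v, hu, hv, _, _, hℓu, hδv, huvO⟩ := exists_isOpen_ordConnected_reProdIm_between
    isCompact_Icc isCompact_Icc isPreconnected_Icc isPreconnected_Icc hO hRO
  have hfU : DifferentiableOn ℂ f (u ×ℂ v) := fun z hz ↦
    (hfan z (huvO hz)).differentiableAt.differentiableWithinAt
  obtain ⟨F, hF⟩ := hfU.isExactOn_reProdIm hu hv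
  have hmem {x y : ℝ} (hx : x ∈ Icc ℓ₁ ℓ₂) (hy : y ∈ Icc 0 δ) : (x + y * I : ℂ) ∈ u ×ℂ v := by
    simpa [mem_reProdIm] using ⟨hℓu hx, hδv hy⟩
  have hσ₀ : σ ℓ₁ ∈ Icc 0 δ := hσrange ℓ₁ (left_mem_Icc.2 hℓ.le)
  have hbottom : ∫ t in ℓ₁..ℓ₂, f t = F ℓ₂ - F ℓ₁ := by
    simpa using integral_graph_eq_sub (σ := fun _ ↦ 0) (σ' := fun _ ↦ 0) hℓ.le hF
      hfU.continuousOn (fun t _ ↦ hasDerivWithinAt_const t _ 0) continuousOn_const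
      fun t ht ↦ hmem ht (left_mem_Icc.2 (hσ₀.1.trans hσ₀.2))
  have hgraph := integral_graph_eq_sub hℓ.le hF hfU.continuousOn hσ hσ'
    fun t ht ↦ hmem ht (hσrange t ht)
  have hvertical {x : ℝ} (hx : x ∈ Icc ℓ₁ ℓ₂) :
      ∫ τ in (0)..σ ℓ₁, f (x + τ * I) * I = F (x + σ ℓ₁ * I) - F x := by
    simpa using integral_vertical_eq_sub hσ₀.1 hF hfU.continuousOn
      fun τ hτ ↦ hmem hx ⟨hτ.1, hτ.2.trans hσ₀.2⟩
  have hedges : ∫ τ in (0)..σ ℓ₁, f (ℓ₁ + τ * I) * I = ∫ τ in (0)..σ ℓ₁, f (ℓ₂ + τ * I) * I :=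
    integral_congr fun τ hτ ↦ by
      rw [uIcc_of_le hσ₀.1] at hτ
      rw [hper τ ⟨hτ.1, hτ.2.trans hσ₀.2⟩]
  rw [hbottom, hgraph, ← hσends]
  linear_combination hvertical (right_mem_Icc.2 hℓ.le) - hvertical (left_mem_Icc.2 hℓ.le) + hedges

/-- Contour deformation with periodic cancellation of the vertical
edges: if `f` is analytic on an open set containing the closed rectangle
`[ℓ₁, ℓ₂] × i[0, δ]`, satisfies `f(ℓ₁ + iτ) = f(ℓ₂ + iτ)` for `τ ∈ [0, δ]`, and
`σ : [ℓ₁, ℓ₂] → [0, δ]` is `C¹` (with derivative `σ'`) and `σ(ℓ₁) = σ(ℓ₂)`, then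
`∫_{ℓ₁}^{ℓ₂} f(t) dt = ∫_{ℓ₁}^{ℓ₂} f(t + iσ(t)) (1 + iσ'(t)) dt`. -/
theorem contour_deformation_periodic
    (ℓ₁ ℓ₂ δ : ℝ) (hℓ : ℓ₁ < ℓ₂) (hδ : 0 < δ)
    (f : ℂ → ℂ)
    (O : Set ℂ) (hO : IsOpen O)
    (hRO : {z : ℂ | z.re ∈ Icc ℓ₁ ℓ₂ ∧ z.im ∈ Icc 0 δ} ⊆ O)
    (hfan : AnalyticOnNhd ℂ f O)
    (hper : ∀ τ ∈ Icc (0 : ℝ) δ,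
      f ((ℓ₁ : ℂ) + (τ : ℂ) * Complex.I) = f ((ℓ₂ : ℂ) + (τ : ℂ) * Complex.I))
    (σ σ' : ℝ → ℝ)
    (hσ : ∀ t ∈ Icc ℓ₁ ℓ₂, HasDerivWithinAt σ (σ' t) (Icc ℓ₁ ℓ₂) t)
    (hσ' : ContinuousOn σ' (Icc ℓ₁ ℓ₂))
    (hσrange : ∀ t ∈ Icc ℓ₁ ℓ₂, σ t ∈ Icc 0 δ)
    (hσends : σ ℓ₁ = σ ℓ₂) :
    (∫ t in ℓ₁..ℓ₂, f (t : ℂ)) =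
      ∫ t in ℓ₁..ℓ₂,
        f ((t : ℂ) + (σ t : ℂ) * Complex.I) * (1 + (σ' t : ℂ) * Complex.I) :=
  contour_deformation_periodic_general ℓ₁ ℓ₂ δ hℓ f O hO hRO hfan hper σ σ' hσ hσ' hσrange hσends
end
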